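/- arXiv:1705.09298 — 2 statements merged into one kernel-verified Lean document; each statement's English description precedes it below -/
import Mathlib

section
/- Let H be a complex inner product space, let F, T, and U be unitary operators on H, and let α, β be real numbers with F ∘ U = exp(iα) · (U ∘ F) and T ∘ U = exp(iβ) · (U ∘ T). Suppose ψ ∈ H is a nonzero vector with (F ∘ T)ψ = cψ for some complex number c, and suppose ⟪ψ, Uψ⟫ ≠ 0. Then exp(i(α + β)) = 1. -/
/-!
`W = F ∘ T` commutes with `U` up to the phase `μ = exp(i(α + β))`. Since `W` is unitary, its
eigenvalue `c` on `ψ` has modulus one, so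
`⟪ψ, Uψ⟫ = ⟪Wψ, WUψ⟫ = ⟪cψ, μ c Uψ⟫ = μ ⟪ψ, Uψ⟫`, and `⟪ψ, Uψ⟫ ≠ 0` forces `μ = 1`.
-/

open scoped InnerProductSpace

theorem LinearMap.apply_apply_eq_smul_of_twisted_comm {R M : Type*} [CommSemiring R]
    [AddCommMonoid M] [Module R M] {F T U : M →ₗ[R] M} {a b : R}
    (hFU : ∀ x, F (U x) = a • U (F x)) (hTU : ∀ x, T (U x) = b • U (T x)) (x : M) :
    F (T (U x)) = (a * b) • U (F (T x)) := by
  rw [hTU, map_smul, hFU, smul_smul, mul_comm]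

theorem LinearIsometry.norm_eq_one_of_apply_eq_smul {𝕜 E : Type*} [NormedField 𝕜]
    [NormedAddCommGroup E] [NormedSpace 𝕜 E] (V : E →ₗᵢ[𝕜] E) {x : E} (hx : x ≠ 0) {c : 𝕜}
    (h : V x = c • x) : ‖c‖ = 1 := by
  have hnorm : ‖c‖ * ‖x‖ = 1 * ‖x‖ := by rw [← norm_smul, ← h, V.norm_map, one_mul]
  exact mul_right_cancel₀ (norm_ne_zero_iff.mpr hx) hnorm

theorem LinearIsometry.eq_one_of_twisted_comm_of_inner_ne_zero {𝕜 E : Type*} [RCLike 𝕜]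
    [NormedAddCommGroup E] [InnerProductSpace 𝕜 E] (W : E →ₗᵢ[𝕜] E) (U : E →ₗ[𝕜] E) {μ : 𝕜}
    (hWU : ∀ x, W (U x) = μ • U (W x)) {ψ : E} {c : 𝕜} (hψ : W ψ = c • ψ)
    (hUψ : ⟪ψ, U ψ⟫_𝕜 ≠ 0) : μ = 1 := by
  have hψ0 : ψ ≠ 0 := by
    rintro rfl
    simp at hUψ
  have hc : ‖c‖ = 1 := W.norm_eq_one_of_apply_eq_smul hψ0 hψ
  have hphase : μ * ⟪ψ, U ψ⟫_𝕜 = ⟪ψ, U ψ⟫_𝕜 :=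
    calc μ * ⟪ψ, U ψ⟫_𝕜 = (starRingEnd 𝕜 c * c) * μ * ⟪ψ, U ψ⟫_𝕜 := by
          rw [RCLike.conj_mul, hc]
          simp
      _ = ⟪c • ψ, (μ * c) • U ψ⟫_𝕜 := by
          rw [inner_smul_left, inner_smul_right]
          ring
      _ = ⟪W ψ, W (U ψ)⟫_𝕜 := by rw [hWU, hψ, map_smul, smul_smul]
      _ = ⟪ψ, U ψ⟫_𝕜 := W.inner_map_map _ _
  exact (mul_eq_right₀ hUψ).mp hphase

theorem filling_enforced_constraint_torus_general
    {H : Type*} [NormedAddCommGroup H] [InnerProductSpace ℂ H]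
    (F T U : H ≃ₗᵢ[ℂ] H) (α β : ℝ)
    (hFU : ∀ x : H, F (U x) = Complex.exp (Complex.I * (α : ℂ)) • U (F x))
    (hTU : ∀ x : H, T (U x) = Complex.exp (Complex.I * (β : ℂ)) • U (T x))
    (ψ : H) (c : ℂ) (hFTψ : F (T ψ) = c • ψ)
    (hz : (inner ℂ ψ (U ψ) : ℂ) ≠ 0) :
    Complex.exp (Complex.I * ((α : ℂ) + (β : ℂ))) = 1 := by
  rw [mul_add, Complex.exp_add]
  have hFTU := LinearMap.apply_apply_eq_smul_of_twisted_comm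
    (F := F.toLinearEquiv.toLinearMap) (T := T.toLinearEquiv.toLinearMap)
    (U := U.toLinearEquiv.toLinearMap) hFU hTU
  exact (T.trans F).toLinearIsometry.eq_one_of_twisted_comm_of_inner_ne_zero
    U.toLinearEquiv.toLinearMap hFTU hFTψ hz

/-- Filling-enforced constraint on the torus (IQHE): if unitaries `F`, `T`, `U` satisfy
`F ∘ U = exp(iα)·(U ∘ F)` and `T ∘ U = exp(iβ)·(U ∘ T)`, the nonzero state `ψ` is an
eigenvector of the effective magnetic translation `F ∘ T`, and `⟪ψ, Uψ⟫ ≠ 0`, then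
`exp(i(α + β)) = 1`. -/
theorem filling_enforced_constraint_torus
    {H : Type*} [NormedAddCommGroup H] [InnerProductSpace ℂ H]
    (F T U : H ≃ₗᵢ[ℂ] H) (α β : ℝ)
    (hFU : ∀ x : H, F (U x) = Complex.exp (Complex.I * (α : ℂ)) • U (F x))
    (hTU : ∀ x : H, T (U x) = Complex.exp (Complex.I * (β : ℂ)) • U (T x))
    (ψ : H) (hψ : ψ ≠ 0) (c : ℂ) (hFTψ : F (T ψ) = c • ψ)
    (hz : (inner ℂ ψ (U ψ) : ℂ) ≠ 0) :
    Complex.exp (Complex.I * ((α : ℂ) + (β : ℂ))) = 1 :=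
  filling_enforced_constraint_torus_general F T U α β hFU hTU ψ c hFTψ hz
end

section
/- Let H be a complex inner product space, and let T and V be unitary operators on H with T ∘ V = ω · (V ∘ T), where ω is a complex number such that ω^m ≠ 1 for every integer m with 1 ≤ m ≤ n − 1 (for some natural number n ≥ 1). Let W be a subspace of H with V(W) ⊆ W, and suppose some nonzero ψ ∈ W satisfies Tψ = λψ for a complex number λ. Then the n vectors ψ, Vψ, V²ψ, …, V^{n−1}ψ all lie in W, are nonzero, and are pairwise orthogonal; consequently, if W is finite dimensional, dim W ≥ n. -/
/-!
`T` is unitary, so its eigenvectors with distinct eigenvalues are orthogonal. The twisted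
commutation `T V = ω V T` makes `Vᵐψ` a `T`-eigenvector with eigenvalue `ωᵐλ`, and these
eigenvalues are pairwise distinct for `m < n`: they have modulus one, and `ωʲ ≠ 1` for
`0 < j < n`. Hence
`ψ, Vψ, …, Vⁿ⁻¹ψ` are nonzero, orthogonal vectors of `W`, so they are linearly independent.
-/

open Module

theorem LinearIsometryEquiv.coe_pow {R E : Type*} [Semiring R] [SeminormedAddCommGroup E]
    [Module R E] (e : E ≃ₗᵢ[R] E) (n : ℕ) : ⇑(e ^ n) = e^[n] :=
  hom_coe_pow _ rfl (fun _ _ ↦ rfl) _ _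

theorem LinearMap.apply_iterate_eq_pow_mul_smul {R M : Type*} [Semiring R] [AddCommMonoid M]
    [Module R M] (T V : M →ₗ[R] M) {ω c : R} (hTV : ∀ x, T (V x) = ω • V (T x)) {x : M}
    (hx : T x = c • x) (m : ℕ) : T (V^[m] x) = (ω ^ m * c) • V^[m] x := by
  induction m with
  | zero => simpa using hx
  | succ m ih =>
    rw [Function.iterate_succ_apply', hTV, ih, map_smul, smul_smul, pow_succ', mul_assoc]

namespace LinearIsometry

variable {𝕜 E : Type*} [RCLike 𝕜]

theorem norm_eq_one_of_apply_eq_smul_s16 [NormedAddCommGroup E] [NormedSpace 𝕜 E]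
    (T : E →ₗᵢ[𝕜] E) {x : E} {a : 𝕜} (hx : x ≠ 0) (h : T x = a • x) : ‖a‖ = 1 := by
  have : ‖a‖ * ‖x‖ = 1 * ‖x‖ := by rw [← norm_smul, ← h, T.norm_map, one_mul]
  exact mul_right_cancel₀ (norm_ne_zero_iff.mpr hx) this

theorem inner_eq_zero_of_apply_eq_smul [NormedAddCommGroup E] [InnerProductSpace 𝕜 E]
    (T : E →ₗᵢ[𝕜] E) {x y : E} {a b : 𝕜} (hab : a ≠ b) (hx : T x = a • x)
    (hy : T y = b • y) : inner 𝕜 x y = 0 := by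
  rcases eq_or_ne x 0 with rfl | hx0
  · exact inner_zero_left y
  -- `‖a‖ = 1` turns `⟪x, y⟫ = ⟪T x, T y⟫ = conj a * b * ⟪x, y⟫` into `(a - b) * ⟪x, y⟫ = 0`.
  have ha : (starRingEnd 𝕜) a * a = 1 := by
    rw [RCLike.conj_mul, T.norm_eq_one_of_apply_eq_smul_s16 hx0 hx]
    norm_num
  have hT : inner 𝕜 x y = (starRingEnd 𝕜) a * b * inner 𝕜 x y := calc
    inner 𝕜 x y = inner 𝕜 (T x) (T y) := (T.inner_map_map x y).symm
    _ = (starRingEnd 𝕜) a * b * inner 𝕜 x y := by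
      rw [hx, hy, inner_smul_left, inner_smul_right, mul_assoc]
  have : (a - b) * inner 𝕜 x y = 0 := by linear_combination a * hT + inner 𝕜 x y * b * ha
  exact (mul_eq_zero.mp this).resolve_left (sub_ne_zero.mpr hab)

end LinearIsometry

theorem Submodule.card_le_finrank_of_pairwise_inner_eq_zero {𝕜 E ι : Type*} [RCLike 𝕜]
    [NormedAddCommGroup E] [InnerProductSpace 𝕜 E] [Fintype ι] (W : Submodule 𝕜 E)
    [FiniteDimensional 𝕜 W] {v : ι → E} (hvW : ∀ i, v i ∈ W) (hv0 : ∀ i, v i ≠ 0)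
    (ho : Pairwise fun i j ↦ inner 𝕜 (v i) (v j) = 0) : Fintype.card ι ≤ finrank 𝕜 W :=
  (linearIndependent_of_ne_zero_of_inner_eq_zero (v := fun i ↦ (⟨v i, hvW i⟩ : W))
    (fun i h ↦ hv0 i (congrArg Subtype.val h)) ho).fintype_card_le_finrank

theorem generalized_LSM_degeneracy_general
    {H : Type*} [NormedAddCommGroup H] [InnerProductSpace ℂ H]
    (T V : H ≃ₗᵢ[ℂ] H) (ω : ℂ) (n : ℕ)
    (hω : ∀ m : ℕ, 1 ≤ m → m ≤ n - 1 → ω ^ m ≠ 1)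
    (hTV : ∀ x : H, T (V x) = ω • V (T x))
    (W : Submodule ℂ H) (hVW : ∀ x ∈ W, V x ∈ W)
    (ψ : H) (hψW : ψ ∈ W) (hψ : ψ ≠ 0) (lam : ℂ) (hTψ : T ψ = lam • ψ) :
    (∀ m : ℕ, m < n → (V ^ m) ψ ∈ W ∧ (V ^ m) ψ ≠ 0) ∧
    (∀ m k : ℕ, m < k → k < n → (inner ℂ ((V ^ m) ψ) ((V ^ k) ψ) : ℂ) = 0) ∧
    (FiniteDimensional ℂ W → n ≤ Module.finrank ℂ W) := by
  have hmem (m : ℕ) : (V ^ m) ψ ∈ W := by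
    rw [V.coe_pow]
    exact Function.Iterate.rec (· ∈ W) hψW hVW m
  have hne (m : ℕ) : (V ^ m) ψ ≠ 0 := (map_ne_zero_iff _ (V ^ m).injective).mpr hψ
  have heig (m : ℕ) : T ((V ^ m) ψ) = (ω ^ m * lam) • (V ^ m) ψ := by
    rw [V.coe_pow]
    exact LinearMap.apply_iterate_eq_pow_mul_smul T.toLinearMap V.toLinearMap hTV hTψ m
  have horth (m k : ℕ) (hmk : m < k) (hkn : k < n) : inner ℂ ((V ^ m) ψ) ((V ^ k) ψ) = 0 := by
    refine T.toLinearIsometry.inner_eq_zero_of_apply_eq_smul ?_ (heig m) (heig k)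
    have hc : ω ^ m * lam ≠ 0 := norm_ne_zero_iff.mp <| by
      rw [T.toLinearIsometry.norm_eq_one_of_apply_eq_smul_s16 (hne m) (heig m)]
      exact one_ne_zero
    have hk : ω ^ k * lam = ω ^ (k - m) * (ω ^ m * lam) := by
      rw [← mul_assoc, ← pow_add, Nat.sub_add_cancel hmk.le]
    intro h
    refine hω (k - m) (by omega) (by omega) (mul_right_cancel₀ hc ?_)
    rw [← hk, ← h, one_mul]
  refine ⟨fun m _ ↦ ⟨hmem m, hne m⟩, horth, fun _ ↦ ?_⟩
  simpa using W.card_le_finrank_of_pairwise_inner_eq_zero (fun i : Fin n ↦ hmem i)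
    (fun i ↦ hne i) fun i j hij ↦ (Fin.lt_or_lt_of_ne hij).elim (fun h ↦ horth i j h j.2)
      fun h ↦ inner_eq_zero_symm.mp (horth j i h i.2)

/-- Generalized Lieb–Schultz–Mattis degeneracy: suppose unitaries `T`, `V` satisfy
`T ∘ V = ω·(V ∘ T)` where `ω^m ≠ 1` for all `1 ≤ m ≤ n − 1`, `W` is a `V`-invariant
subspace, and `ψ ∈ W` is a nonzero `T`-eigenvector. Then the `n` vectors
`ψ, Vψ, …, V^{n−1}ψ` lie in `W`, are nonzero and pairwise orthogonal; hence if `W` is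
finite dimensional, `dim W ≥ n`. -/
theorem generalized_LSM_degeneracy
    {H : Type*} [NormedAddCommGroup H] [InnerProductSpace ℂ H]
    (T V : H ≃ₗᵢ[ℂ] H) (ω : ℂ) (n : ℕ) (hn : 1 ≤ n)
    (hω : ∀ m : ℕ, 1 ≤ m → m ≤ n - 1 → ω ^ m ≠ 1)
    (hTV : ∀ x : H, T (V x) = ω • V (T x))
    (W : Submodule ℂ H) (hVW : ∀ x ∈ W, V x ∈ W)
    (ψ : H) (hψW : ψ ∈ W) (hψ : ψ ≠ 0) (lam : ℂ) (hTψ : T ψ = lam • ψ) :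
    (∀ m : ℕ, m < n → (V ^ m) ψ ∈ W ∧ (V ^ m) ψ ≠ 0) ∧
    (∀ m k : ℕ, m < k → k < n → (inner ℂ ((V ^ m) ψ) ((V ^ k) ψ) : ℂ) = 0) ∧
    (FiniteDimensional ℂ W → n ≤ Module.finrank ℂ W) :=
  generalized_LSM_degeneracy_general T V ω n hω hTV W hVW ψ hψW hψ lam hTψ
end
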